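/- arXiv:1308.2723 — 4 statements merged into one kernel-verified Lean document; each statement's English description precedes it below -/
import Mathlib

section
/- Let α ∈ (0,1). For all commuting accretive a, b ∈ B(H), with the fractional powers defined via the Balakrishnan integral, and all unit vectors ζ ∈ H: ‖(a^α − b^α)ζ‖ ≤ (sin(απ)/π)(2/α + 1/(1−α))‖(a−b)ζ‖^α. -/
open MeasureTheory Real

namespace Stmt5Aux

variable {H : Type*} [NormedAddCommGroup H] [InnerProductSpace ℂ H] [CompleteSpace H]

lemma re_inner_ge (a : H →L[ℂ] H) (ha : ∀ ξ : H, 0 ≤ (inner ℂ (a ξ) ξ : ℂ).re)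
    (t : ℝ) (ξ : H) :
    t * ‖ξ‖ ^ 2 ≤ (inner ℂ ((((t : ℂ) • (1 : H →L[ℂ] H) + a)) ξ) ξ : ℂ).re := by
  have h1 : (inner ℂ ((((t : ℂ) • (1 : H →L[ℂ] H) + a)) ξ) ξ : ℂ)
      = ((t * ‖ξ‖ ^ 2 : ℝ) : ℂ) + inner ℂ (a ξ) ξ := by
    rw [ContinuousLinearMap.add_apply, ContinuousLinearMap.smul_apply,
      ContinuousLinearMap.one_apply, inner_add_left, inner_smul_left,
      inner_self_eq_norm_sq_to_K]
    push_cast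
    rw [Complex.conj_ofReal]
    norm_num
  rw [h1, Complex.add_re, Complex.ofReal_re]
  nlinarith [ha ξ]

lemma lower_bound (a : H →L[ℂ] H) (ha : ∀ ξ : H, 0 ≤ (inner ℂ (a ξ) ξ : ℂ).re)
    {t : ℝ} (ht : 0 < t) (ξ : H) :
    t * ‖ξ‖ ≤ ‖((t : ℂ) • (1 : H →L[ℂ] H) + a) ξ‖ := by
  rcases eq_or_ne ξ 0 with rfl | hx
  · simp
  have hξ : 0 < ‖ξ‖ := norm_pos_iff.mpr hx
  have key : t * ‖ξ‖ ^ 2 ≤ ‖((t : ℂ) • (1 : H →L[ℂ] H) + a) ξ‖ * ‖ξ‖ := by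
    refine (re_inner_ge a ha t ξ).trans ?_
    calc (inner ℂ ((((t : ℂ) • (1 : H →L[ℂ] H) + a)) ξ) ξ : ℂ).re
        ≤ ‖(inner ℂ ((((t : ℂ) • (1 : H →L[ℂ] H) + a)) ξ) ξ : ℂ)‖ := Complex.re_le_norm _
      _ ≤ ‖((t : ℂ) • (1 : H →L[ℂ] H) + a) ξ‖ * ‖ξ‖ := norm_inner_le_norm _ _
  exact le_of_mul_le_mul_right (by nlinarith) hξ


lemma isUnit_shift (a : H →L[ℂ] H) (ha : ∀ ξ : H, 0 ≤ (inner ℂ (a ξ) ξ : ℂ).re)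
    {t : ℝ} (ht : 0 < t) : IsUnit ((t : ℂ) • (1 : H →L[ℂ] H) + a) := by
  set f : H →L[ℂ] H := (t : ℂ) • (1 : H →L[ℂ] H) + a with hf
  have hlow := lower_bound a ha ht
  have hanti : AntilipschitzWith ⟨t⁻¹, inv_nonneg.mpr ht.le⟩ f := by
    refine f.antilipschitz_of_bound fun ξ => ?_
    have := hlow ξ
    change ‖ξ‖ ≤ t⁻¹ * ‖f ξ‖
    rw [inv_mul_eq_div, le_div_iff₀ ht]
    linarith
  rw [ContinuousLinearMap.isUnit_iff_bijective]
  refine ⟨hanti.injective, ?_⟩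
  have hclosed : IsClosed (LinearMap.range (f : H →ₗ[ℂ] H) : Set H) :=
    by rw [LinearMap.coe_range]; exact hanti.isClosed_range f.uniformContinuous
  haveI : CompleteSpace (LinearMap.range (f : H →ₗ[ℂ] H)) := hclosed.completeSpace_coe
  have horth : (LinearMap.range (f : H →ₗ[ℂ] H))ᗮ = ⊥ := by
    rw [Submodule.eq_bot_iff]
    intro η hη
    have h0 : (inner ℂ (f η) η : ℂ) = 0 :=
      (Submodule.mem_orthogonal _ η).mp hη (f η) (LinearMap.mem_range_self _ η)
    have h1 := re_inner_ge a ha t η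
    rw [← hf, h0] at h1
    simp only [Complex.zero_re] at h1
    by_contra hne
    have hpos : 0 < ‖η‖ := norm_pos_iff.mpr hne
    nlinarith [pow_pos hpos 2]
  have hrange : LinearMap.range (f : H →ₗ[ℂ] H) = ⊤ := Submodule.orthogonal_eq_bot_iff.mp horth
  exact LinearMap.range_eq_top.mp hrange

lemma inverse_apply (a : H →L[ℂ] H) (ha : ∀ ξ : H, 0 ≤ (inner ℂ (a ξ) ξ : ℂ).re)
    {t : ℝ} (ht : 0 < t) (η : H) :
    ((t : ℂ) • (1 : H →L[ℂ] H) + a) (Ring.inverse ((t : ℂ) • (1 : H →L[ℂ] H) + a) η) = η := by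
  have h1 : ((t : ℂ) • (1 : H →L[ℂ] H) + a) * Ring.inverse ((t : ℂ) • (1 : H →L[ℂ] H) + a) = 1 :=
    Ring.mul_inverse_cancel _ (isUnit_shift a ha ht)
  have := congrArg (fun g : H →L[ℂ] H => g η) h1
  simpa [ContinuousLinearMap.mul_apply] using this

lemma inverse_norm_apply_le (a : H →L[ℂ] H) (ha : ∀ ξ : H, 0 ≤ (inner ℂ (a ξ) ξ : ℂ).re)
    {t : ℝ} (ht : 0 < t) (η : H) :
    ‖Ring.inverse ((t : ℂ) • (1 : H →L[ℂ] H) + a) η‖ ≤ t⁻¹ * ‖η‖ := by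
  have h2 := lower_bound a ha ht (Ring.inverse ((t : ℂ) • (1 : H →L[ℂ] H) + a) η)
  rw [inverse_apply a ha ht η] at h2
  rw [inv_mul_eq_div, le_div_iff₀ ht]
  linarith

lemma inverse_norm_le (a : H →L[ℂ] H) (ha : ∀ ξ : H, 0 ≤ (inner ℂ (a ξ) ξ : ℂ).re)
    {t : ℝ} (ht : 0 < t) :
    ‖Ring.inverse ((t : ℂ) • (1 : H →L[ℂ] H) + a)‖ ≤ t⁻¹ :=
  ContinuousLinearMap.opNorm_le_bound _ (inv_nonneg.mpr ht.le)
    (inverse_norm_apply_le a ha ht)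

section RingId

variable {R : Type*} [Ring R]

lemma comm_inv {x u : R} (hu : IsUnit u) (hc : x * u = u * x) :
    x * Ring.inverse u = Ring.inverse u * x := by
  obtain ⟨v, rfl⟩ := hu
  rw [Ring.inverse_unit]
  have hcu : Commute x (v : R) := hc
  exact hcu.units_inv_right

lemma Ra_mul (T a Ra : R) (hT : ∀ x : R, T * x = x * T)
    (hRa1 : Ra * (T + a) = 1) : Ra * a = 1 - T * Ra := by
  have : Ra * T + Ra * a = 1 := by rw [← mul_add, hRa1]
  rw [← hT Ra] at this
  rw [eq_sub_iff_add_eq, add_comm]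
  exact this

lemma key_id2 (T a b Ra Rb : R) (hT : ∀ x : R, T * x = x * T)
    (hRa1 : Ra * (T + a) = 1) (hRb1 : Rb * (T + b) = 1) :
    Ra * a - Rb * b = T * (Rb - Ra) := by
  rw [Ra_mul T a Ra hT hRa1, Ra_mul T b Rb hT hRb1, mul_sub]
  abel

lemma key_id3 (T a b Ra Rb : R) (hT : ∀ x : R, T * x = x * T)
    (hab : a * b = b * a)
    (hRa1 : Ra * (T + a) = 1) (h1Ra : (T + a) * Ra = 1)
    (hRb1 : Rb * (T + b) = 1) (h1Rb : (T + b) * Rb = 1) :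
    Ra * a - Rb * b = T * (Ra * (Rb * (a - b))) := by
  have hcomm : ∀ x : R, x * (T + b) = (T + b) * x → x * Rb = Rb * x := by
    intro x hx
    have h4 : (T + b) * (x * Rb) = x := by rw [← mul_assoc, ← hx, mul_assoc, h1Rb, mul_one]
    calc x * Rb = 1 * (x * Rb) := (one_mul _).symm
      _ = Rb * (T + b) * (x * Rb) := by rw [hRb1]
      _ = Rb * ((T + b) * (x * Rb)) := by rw [mul_assoc]
      _ = Rb * x := by rw [h4]
  have haRb : a * Rb = Rb * a := hcomm a (by rw [mul_add, add_mul, ← hT a, hab])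
  have hbRb : b * Rb = Rb * b := hcomm b (by rw [mul_add, add_mul, ← hT b])
  have hsub : Ra * (a - b) * Rb = Rb - Ra := by
    have h1 : Ra * ((T + b) - (T + a)) * Rb = Ra - Rb := by
      rw [mul_sub, sub_mul, mul_assoc Ra (T+b) Rb, h1Rb, mul_one, hRa1, one_mul]
    have h2 : ((T + b) - (T + a) : R) = b - a := by abel
    rw [h2] at h1
    have h3 : Ra * (a - b) * Rb = -(Ra * (b - a) * Rb) := by noncomm_ring
    rw [h3, h1, neg_sub]
  have hmove : (a - b) * Rb = Rb * (a - b) := by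
    rw [sub_mul, mul_sub, haRb, hbRb]
  rw [key_id2 T a b Ra Rb hT hRa1 hRb1, ← hsub, mul_assoc Ra (a-b) Rb, hmove]

end RingId


lemma hT_central (t : ℝ) : ∀ x : H →L[ℂ] H,
    ((t : ℂ) • (1 : H →L[ℂ] H)) * x = x * ((t : ℂ) • (1 : H →L[ℂ] H)) := by
  intro x; rw [smul_mul_assoc, mul_smul_comm, one_mul, mul_one]

lemma Ra_mul_a (a : H →L[ℂ] H) (ha : ∀ ξ : H, 0 ≤ (inner ℂ (a ξ) ξ : ℂ).re)
    {t : ℝ} (ht : 0 < t) :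
    Ring.inverse ((t : ℂ) • (1 : H →L[ℂ] H) + a) * a
      = 1 - (t : ℂ) • Ring.inverse ((t : ℂ) • (1 : H →L[ℂ] H) + a) := by
  have := Ra_mul ((t : ℂ) • (1 : H →L[ℂ] H)) a
    (Ring.inverse ((t : ℂ) • (1 : H →L[ℂ] H) + a)) (hT_central t)
    (Ring.inverse_mul_cancel _ (isUnit_shift a ha ht))
  rw [this, smul_mul_assoc, one_mul]

lemma norm_Ra_mul_a_le (a : H →L[ℂ] H) (ha : ∀ ξ : H, 0 ≤ (inner ℂ (a ξ) ξ : ℂ).re)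
    {t : ℝ} (ht : 0 < t) :
    ‖Ring.inverse ((t : ℂ) • (1 : H →L[ℂ] H) + a) * a‖ ≤ 2 := by
  rw [Ra_mul_a a ha ht]
  have h1 : ‖(1 : H →L[ℂ] H)‖ ≤ 1 := by
    rw [ContinuousLinearMap.one_def]; exact ContinuousLinearMap.norm_id_le
  have h2 : ‖(t : ℂ) • Ring.inverse ((t : ℂ) • (1 : H →L[ℂ] H) + a)‖ ≤ 1 := by
    rw [norm_smul, Complex.norm_real, Real.norm_eq_abs, abs_of_pos ht]
    calc t * ‖Ring.inverse ((t : ℂ) • (1 : H →L[ℂ] H) + a)‖ ≤ t * t⁻¹ :=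
        mul_le_mul_of_nonneg_left (inverse_norm_le a ha ht) ht.le
      _ = 1 := mul_inv_cancel₀ ht.ne'
  calc ‖(1 : H →L[ℂ] H) - (t : ℂ) • Ring.inverse ((t : ℂ) • (1 : H →L[ℂ] H) + a)‖
      ≤ ‖(1 : H →L[ℂ] H)‖ + ‖(t : ℂ) • Ring.inverse ((t : ℂ) • (1 : H →L[ℂ] H) + a)‖ :=
        norm_sub_le _ _
    _ ≤ 2 := by linarith

lemma contOn_integrand (α : ℝ) (a : H →L[ℂ] H) (ha : ∀ ξ : H, 0 ≤ (inner ℂ (a ξ) ξ : ℂ).re) :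
    ContinuousOn
      (fun t : ℝ => (t ^ (α - 1) : ℝ) • (Ring.inverse ((t : ℂ) • (1 : H →L[ℂ] H) + a) * a))
      (Set.Ioi 0) := by
  have hinv : ContinuousOn (fun t : ℝ => Ring.inverse ((t : ℂ) • (1 : H →L[ℂ] H) + a))
      (Set.Ioi 0) := by
    intro t ht
    have h1 : ContinuousAt (fun s : ℝ => ((s : ℂ) • (1 : H →L[ℂ] H) + a)) t :=
      ((Complex.continuous_ofReal.smul continuous_const).add continuous_const).continuousAt
    have h2 : ContinuousAt Ring.inverse ((t : ℂ) • (1 : H →L[ℂ] H) + a) := by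
      have := NormedRing.inverse_continuousAt (isUnit_shift a ha (Set.mem_Ioi.mp ht)).unit
      rwa [IsUnit.unit_spec] at this
    exact (ContinuousAt.comp (f := fun s : ℝ => ((s : ℂ) • (1 : H →L[ℂ] H) + a)) h2
      h1).continuousWithinAt
  have hr : ContinuousOn (fun t : ℝ => t ^ (α - 1)) (Set.Ioi 0) := fun t ht =>
    (Real.continuousAt_rpow_const t _ (Or.inl (ne_of_gt (Set.mem_Ioi.mp ht)))).continuousWithinAt
  exact hr.smul (hinv.mul continuousOn_const)

lemma integrable_integrand (α : ℝ) (hα : α ∈ Set.Ioo (0 : ℝ) 1)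
    (a : H →L[ℂ] H) (ha : ∀ ξ : H, 0 ≤ (inner ℂ (a ξ) ξ : ℂ).re) :
    IntegrableOn
      (fun t : ℝ => (t ^ (α - 1) : ℝ) • (Ring.inverse ((t : ℂ) • (1 : H →L[ℂ] H) + a) * a))
      (Set.Ioi 0) := by
  obtain ⟨hα0, hα1⟩ := hα
  set F := fun t : ℝ => (t ^ (α - 1) : ℝ) • (Ring.inverse ((t : ℂ) • (1 : H →L[ℂ] H) + a) * a)
    with hF
  have hmeas : AEStronglyMeasurable F (volume.restrict (Set.Ioi (0:ℝ))) :=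
    (contOn_integrand α a ha).aestronglyMeasurable_of_isSeparable measurableSet_Ioi
      (TopologicalSpace.IsSeparable.of_separableSpace _)
  have h1 : IntegrableOn F (Set.Ioc (0:ℝ) 1) := by
    have hg : IntegrableOn (fun t : ℝ => 2 * t ^ (α - 1)) (Set.Ioc (0:ℝ) 1) := by
      have h := intervalIntegral.intervalIntegrable_rpow' (a := (0:ℝ)) (b := 1)
        (show (-1:ℝ) < α - 1 by linarith)
      rw [intervalIntegrable_iff_integrableOn_Ioc_of_le zero_le_one] at h
      exact h.const_mul 2
    refine Integrable.mono' hg (hmeas.mono_set Set.Ioc_subset_Ioi_self) ?_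
    refine (ae_restrict_iff' measurableSet_Ioc).mpr (ae_of_all _ fun t ht => ?_)
    have ht0 : 0 < t := ht.1
    rw [hF, norm_smul, Real.norm_eq_abs, abs_of_pos (Real.rpow_pos_of_pos ht0 _)]
    rw [mul_comm 2 (t ^ (α - 1))]
    exact mul_le_mul_of_nonneg_left (norm_Ra_mul_a_le a ha ht0)
      (Real.rpow_pos_of_pos ht0 _).le
  have h2 : IntegrableOn F (Set.Ioi (1:ℝ)) := by
    have hg : IntegrableOn (fun t : ℝ => ‖a‖ * t ^ (α - 2)) (Set.Ioi (1:ℝ)) :=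
      (integrableOn_Ioi_rpow_of_lt (show α - 2 < -1 by linarith) one_pos).const_mul ‖a‖
    refine Integrable.mono' hg (hmeas.mono_set (Set.Ioi_subset_Ioi zero_le_one)) ?_
    refine (ae_restrict_iff' measurableSet_Ioi).mpr (ae_of_all _ fun t ht => ?_)
    have ht1 : 1 < t := Set.mem_Ioi.mp ht
    have ht0 : 0 < t := lt_trans zero_lt_one ht1
    rw [hF, norm_smul, Real.norm_eq_abs, abs_of_pos (Real.rpow_pos_of_pos ht0 _)]
    have hRa : ‖Ring.inverse ((t : ℂ) • (1 : H →L[ℂ] H) + a) * a‖ ≤ t⁻¹ * ‖a‖ :=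
      le_trans (norm_mul_le _ _) (mul_le_mul_of_nonneg_right (inverse_norm_le a ha ht0)
        (norm_nonneg a))
    calc t ^ (α - 1) * ‖Ring.inverse ((t : ℂ) • (1 : H →L[ℂ] H) + a) * a‖
        ≤ t ^ (α - 1) * (t⁻¹ * ‖a‖) :=
          mul_le_mul_of_nonneg_left hRa (Real.rpow_pos_of_pos ht0 _).le
      _ = ‖a‖ * t ^ (α - 2) := by
          rw [← Real.rpow_neg_one t, ← mul_assoc, ← Real.rpow_add ht0,
            show α - 1 + (-1) = α - 2 by ring, mul_comm]
  have := h1.union h2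
  rwa [Set.Ioc_union_Ioi_eq_Ioi zero_le_one] at this


lemma pointwise_bound_2 (a b : H →L[ℂ] H)
    (ha : ∀ ξ : H, 0 ≤ (inner ℂ (a ξ) ξ : ℂ).re) (hb : ∀ ξ : H, 0 ≤ (inner ℂ (b ξ) ξ : ℂ).re)
    {t : ℝ} (ht : 0 < t) {ζ : H} (hζ : ‖ζ‖ ≤ 1) :
    ‖(Ring.inverse ((t : ℂ) • (1 : H →L[ℂ] H) + a) * a
        - Ring.inverse ((t : ℂ) • (1 : H →L[ℂ] H) + b) * b) ζ‖ ≤ 2 := by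
  have hid := key_id2 ((t : ℂ) • (1 : H →L[ℂ] H)) a b
    (Ring.inverse ((t : ℂ) • (1 : H →L[ℂ] H) + a))
    (Ring.inverse ((t : ℂ) • (1 : H →L[ℂ] H) + b)) (hT_central t)
    (Ring.inverse_mul_cancel _ (isUnit_shift a ha ht))
    (Ring.inverse_mul_cancel _ (isUnit_shift b hb ht))
  rw [hid, smul_mul_assoc, one_mul, ContinuousLinearMap.smul_apply,
    ContinuousLinearMap.sub_apply]
  rw [norm_smul, Complex.norm_real, Real.norm_eq_abs, abs_of_pos ht]
  have h1 : ‖Ring.inverse ((t : ℂ) • (1 : H →L[ℂ] H) + b) ζ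
      - Ring.inverse ((t : ℂ) • (1 : H →L[ℂ] H) + a) ζ‖ ≤ t⁻¹ * 2 := by
    calc ‖Ring.inverse ((t : ℂ) • (1 : H →L[ℂ] H) + b) ζ
          - Ring.inverse ((t : ℂ) • (1 : H →L[ℂ] H) + a) ζ‖
        ≤ ‖Ring.inverse ((t : ℂ) • (1 : H →L[ℂ] H) + b) ζ‖
          + ‖Ring.inverse ((t : ℂ) • (1 : H →L[ℂ] H) + a) ζ‖ := norm_sub_le _ _
      _ ≤ t⁻¹ * ‖ζ‖ + t⁻¹ * ‖ζ‖ :=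
          add_le_add (inverse_norm_apply_le b hb ht ζ) (inverse_norm_apply_le a ha ht ζ)
      _ ≤ t⁻¹ * 2 := by
          have h0 : 0 ≤ t⁻¹ := inv_nonneg.mpr ht.le
          nlinarith
  calc t * ‖Ring.inverse ((t : ℂ) • (1 : H →L[ℂ] H) + b) ζ
        - Ring.inverse ((t : ℂ) • (1 : H →L[ℂ] H) + a) ζ‖
      ≤ t * (t⁻¹ * 2) := mul_le_mul_of_nonneg_left h1 ht.le
    _ = 2 := by rw [← mul_assoc, mul_inv_cancel₀ ht.ne', one_mul]

lemma pointwise_bound_d (a b : H →L[ℂ] H)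
    (ha : ∀ ξ : H, 0 ≤ (inner ℂ (a ξ) ξ : ℂ).re) (hb : ∀ ξ : H, 0 ≤ (inner ℂ (b ξ) ξ : ℂ).re)
    (hab : a * b = b * a) {t : ℝ} (ht : 0 < t) (ζ : H) :
    ‖(Ring.inverse ((t : ℂ) • (1 : H →L[ℂ] H) + a) * a
        - Ring.inverse ((t : ℂ) • (1 : H →L[ℂ] H) + b) * b) ζ‖ ≤ t⁻¹ * ‖(a - b) ζ‖ := by
  have hid := key_id3 ((t : ℂ) • (1 : H →L[ℂ] H)) a b
    (Ring.inverse ((t : ℂ) • (1 : H →L[ℂ] H) + a))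
    (Ring.inverse ((t : ℂ) • (1 : H →L[ℂ] H) + b)) (hT_central t) hab
    (Ring.inverse_mul_cancel _ (isUnit_shift a ha ht))
    (Ring.mul_inverse_cancel _ (isUnit_shift a ha ht))
    (Ring.inverse_mul_cancel _ (isUnit_shift b hb ht))
    (Ring.mul_inverse_cancel _ (isUnit_shift b hb ht))
  rw [hid, smul_mul_assoc, one_mul, ContinuousLinearMap.smul_apply,
    ContinuousLinearMap.mul_apply, ContinuousLinearMap.mul_apply]
  rw [norm_smul, Complex.norm_real, Real.norm_eq_abs, abs_of_pos ht]
  have h1 : ‖Ring.inverse ((t : ℂ) • (1 : H →L[ℂ] H) + a)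
      (Ring.inverse ((t : ℂ) • (1 : H →L[ℂ] H) + b) ((a - b) ζ))‖
      ≤ t⁻¹ * (t⁻¹ * ‖(a - b) ζ‖) := by
    refine (inverse_norm_apply_le a ha ht _).trans ?_
    exact mul_le_mul_of_nonneg_left (inverse_norm_apply_le b hb ht _) (inv_nonneg.mpr ht.le)
  calc t * ‖Ring.inverse ((t : ℂ) • (1 : H →L[ℂ] H) + a)
        (Ring.inverse ((t : ℂ) • (1 : H →L[ℂ] H) + b) ((a - b) ζ))‖
      ≤ t * (t⁻¹ * (t⁻¹ * ‖(a - b) ζ‖)) := mul_le_mul_of_nonneg_left h1 ht.le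
    _ = t⁻¹ * ‖(a - b) ζ‖ := by rw [← mul_assoc, mul_inv_cancel₀ ht.ne', one_mul]

end Stmt5Aux

/-- For `α ∈ (0,1)` and `K = (sin(απ)/π)(2/α + 1/(1−α))`: for all commuting accretive
`a, b ∈ B(H)` (fractional powers via the Balakrishnan integral) and all `ζ` with `‖ζ‖ ≤ 1`,
`‖(a^α − b^α)ζ‖ ≤ K‖(a−b)ζ‖^α`. -/
theorem stmt5 {H : Type*} [NormedAddCommGroup H] [InnerProductSpace ℂ H] [CompleteSpace H]
    (α : ℝ) (hα : α ∈ Set.Ioo (0 : ℝ) 1)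
    (a b : H →L[ℂ] H)
    (ha : ∀ ξ : H, 0 ≤ (inner ℂ (a ξ) ξ : ℂ).re)
    (hb : ∀ ξ : H, 0 ≤ (inner ℂ (b ξ) ξ : ℂ).re)
    (hab : a * b = b * a) (ζ : H) (hζ : ‖ζ‖ ≤ 1) :
    ‖(((Real.sin (α * π) / π) •
          ∫ t in Set.Ioi (0 : ℝ),
            (t ^ (α - 1) : ℝ) • (Ring.inverse ((t : ℂ) • (1 : H →L[ℂ] H) + a) * a)) -
        ((Real.sin (α * π) / π) •
          ∫ t in Set.Ioi (0 : ℝ),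
            (t ^ (α - 1) : ℝ) • (Ring.inverse ((t : ℂ) • (1 : H →L[ℂ] H) + b) * b))) ζ‖ ≤
      (Real.sin (α * π) / π) * (2 / α + 1 / (1 - α)) * ‖(a - b) ζ‖ ^ α := by
  obtain ⟨hα0, hα1⟩ := hα
  set c := Real.sin (α * π) / π with hc
  have hcpos : 0 ≤ c := div_nonneg (Real.sin_nonneg_of_nonneg_of_le_pi
    (by positivity) (by nlinarith [Real.pi_pos])) Real.pi_pos.le
  set fA : ℝ → (H →L[ℂ] H) :=
    fun t => (t ^ (α - 1) : ℝ) • (Ring.inverse ((t : ℂ) • (1 : H →L[ℂ] H) + a) * a) with hfA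
  set fB : ℝ → (H →L[ℂ] H) :=
    fun t => (t ^ (α - 1) : ℝ) • (Ring.inverse ((t : ℂ) • (1 : H →L[ℂ] H) + b) * b) with hfB
  have hIA : IntegrableOn fA (Set.Ioi 0) := Stmt5Aux.integrable_integrand α ⟨hα0, hα1⟩ a ha
  have hIB : IntegrableOn fB (Set.Ioi 0) := Stmt5Aux.integrable_integrand α ⟨hα0, hα1⟩ b hb
  have hIA' : Integrable (fun t => fA t ζ) (volume.restrict (Set.Ioi 0)) := by
    have := (ContinuousLinearMap.apply ℂ H ζ).integrable_comp hIA
    simpa using this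
  have hIB' : Integrable (fun t => fB t ζ) (volume.restrict (Set.Ioi 0)) := by
    have := (ContinuousLinearMap.apply ℂ H ζ).integrable_comp hIB
    simpa using this
  have hG : Integrable (fun t => fA t ζ - fB t ζ) (volume.restrict (Set.Ioi 0)) :=
    hIA'.sub hIB'
  have happly : ((c • ∫ t in Set.Ioi (0:ℝ), fA t) - (c • ∫ t in Set.Ioi (0:ℝ), fB t)) ζ
      = c • ∫ t in Set.Ioi (0:ℝ), (fA t ζ - fB t ζ) := by
    rw [ContinuousLinearMap.sub_apply, ContinuousLinearMap.smul_apply,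
      ContinuousLinearMap.smul_apply, ← smul_sub,
      ContinuousLinearMap.integral_apply hIA, ContinuousLinearMap.integral_apply hIB,
      ← integral_sub hIA' hIB']
  rw [happly, norm_smul, Real.norm_eq_abs, abs_of_nonneg hcpos]
  set d := ‖(a - b) ζ‖ with hd
  have hbd2 : ∀ t ∈ Set.Ioi (0:ℝ), ‖fA t ζ - fB t ζ‖ ≤ 2 * t ^ (α - 1) := by
    intro t ht
    have ht0 : 0 < t := ht
    have heq : fA t ζ - fB t ζ = (t ^ (α-1) : ℝ) •
        ((Ring.inverse ((t : ℂ) • (1 : H →L[ℂ] H) + a) * a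
          - Ring.inverse ((t : ℂ) • (1 : H →L[ℂ] H) + b) * b) ζ) := by
      simp [hfA, hfB, ContinuousLinearMap.smul_apply, ContinuousLinearMap.sub_apply, smul_sub]
    rw [heq, norm_smul, Real.norm_eq_abs, abs_of_pos (Real.rpow_pos_of_pos ht0 _), mul_comm 2]
    exact mul_le_mul_of_nonneg_left (Stmt5Aux.pointwise_bound_2 a b ha hb ht0 hζ)
      (Real.rpow_pos_of_pos ht0 _).le
  have hbdd : ∀ t ∈ Set.Ioi (0:ℝ), ‖fA t ζ - fB t ζ‖ ≤ d * t ^ (α - 2) := by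
    intro t ht
    have ht0 : 0 < t := ht
    have heq : fA t ζ - fB t ζ = (t ^ (α-1) : ℝ) •
        ((Ring.inverse ((t : ℂ) • (1 : H →L[ℂ] H) + a) * a
          - Ring.inverse ((t : ℂ) • (1 : H →L[ℂ] H) + b) * b) ζ) := by
      simp [hfA, hfB, ContinuousLinearMap.smul_apply, ContinuousLinearMap.sub_apply, smul_sub]
    rw [heq, norm_smul, Real.norm_eq_abs, abs_of_pos (Real.rpow_pos_of_pos ht0 _)]
    calc t ^ (α - 1) * ‖(Ring.inverse ((t : ℂ) • (1 : H →L[ℂ] H) + a) * a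
          - Ring.inverse ((t : ℂ) • (1 : H →L[ℂ] H) + b) * b) ζ‖
        ≤ t ^ (α - 1) * (t⁻¹ * d) :=
          mul_le_mul_of_nonneg_left (Stmt5Aux.pointwise_bound_d a b ha hb hab ht0 ζ)
            (Real.rpow_pos_of_pos ht0 _).le
      _ = d * t ^ (α - 2) := by
          rw [← Real.rpow_neg_one t, ← mul_assoc, ← Real.rpow_add ht0,
            show α - 1 + (-1) = α - 2 by ring, mul_comm]
  rcases (norm_nonneg ((a - b) ζ)).lt_or_eq with hdpos | hd0
  · -- d > 0
    have hGsub1 : IntegrableOn (fun t => fA t ζ - fB t ζ) (Set.Ioc 0 d) :=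
      MeasureTheory.IntegrableOn.mono_set hG Set.Ioc_subset_Ioi_self
    have hGsub2 : IntegrableOn (fun t => fA t ζ - fB t ζ) (Set.Ioi d) :=
      MeasureTheory.IntegrableOn.mono_set hG (Set.Ioi_subset_Ioi hdpos.le)
    have hsplit : (∫ t in Set.Ioi (0:ℝ), (fA t ζ - fB t ζ))
        = (∫ t in Set.Ioc (0:ℝ) d, (fA t ζ - fB t ζ)) + ∫ t in Set.Ioi d, (fA t ζ - fB t ζ) := by
      rw [← Set.Ioc_union_Ioi_eq_Ioi hdpos.le,
        setIntegral_union (Set.Ioc_disjoint_Ioi le_rfl) measurableSet_Ioi hGsub1 hGsub2]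
    have hb1 : ‖∫ t in Set.Ioc (0:ℝ) d, (fA t ζ - fB t ζ)‖ ≤ 2 * (d ^ α / α) := by
      have hg : IntegrableOn (fun t : ℝ => 2 * t ^ (α-1)) (Set.Ioc 0 d) := by
        have h := intervalIntegral.intervalIntegrable_rpow' (a := (0:ℝ)) (b := d)
          (show (-1:ℝ) < α - 1 by linarith)
        rw [intervalIntegrable_iff_integrableOn_Ioc_of_le hdpos.le] at h
        exact h.const_mul 2
      have hle := norm_integral_le_of_norm_le hg ((ae_restrict_iff' measurableSet_Ioc).mpr
        (ae_of_all _ fun t ht => hbd2 t (Set.Ioc_subset_Ioi_self ht)))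
      refine hle.trans (le_of_eq ?_)
      rw [integral_const_mul, ← intervalIntegral.integral_of_le hdpos.le,
        integral_rpow (Or.inl (by linarith : (-1:ℝ) < α - 1)),
        show α - 1 + 1 = α by ring, Real.zero_rpow hα0.ne']
      ring
    have hb2 : ‖∫ t in Set.Ioi d, (fA t ζ - fB t ζ)‖ ≤ d * (-(d ^ (α - 1)) / (α - 1)) := by
      have hg : IntegrableOn (fun t : ℝ => d * t ^ (α-2)) (Set.Ioi d) :=
        (integrableOn_Ioi_rpow_of_lt (by linarith) hdpos).const_mul d
      have hle := norm_integral_le_of_norm_le hg ((ae_restrict_iff' measurableSet_Ioi).mpr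
        (ae_of_all _ fun t ht => hbdd t (Set.Ioi_subset_Ioi hdpos.le ht)))
      refine hle.trans (le_of_eq ?_)
      rw [integral_const_mul, integral_Ioi_rpow_of_lt (by linarith : α - 2 < -1) hdpos,
        show α - 2 + 1 = α - 1 by ring]
    rw [hsplit]
    have hnorm : ‖(∫ t in Set.Ioc (0:ℝ) d, (fA t ζ - fB t ζ))
        + ∫ t in Set.Ioi d, (fA t ζ - fB t ζ)‖
        ≤ 2 * (d ^ α / α) + d * (-(d ^ (α - 1)) / (α - 1)) :=
      (norm_add_le _ _).trans (add_le_add hb1 hb2)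
    have harith : 2 * (d ^ α / α) + d * (-(d ^ (α - 1)) / (α - 1))
        = (2 / α + 1 / (1 - α)) * d ^ α := by
      have hda : d ^ (α - 1) = d ^ α / d := by rw [Real.rpow_sub hdpos, Real.rpow_one]
      have h1 : α ≠ 0 := hα0.ne'
      have h2 : α - 1 ≠ 0 := by intro h; apply absurd hα1; linarith [sub_eq_zero.mp h]
      have h3 : (1:ℝ) - α ≠ 0 := by intro h; apply h2; linarith
      have h4 : d ≠ 0 := ne_of_gt hdpos
      rw [hda]
      field_simp
      ring
    calc c * ‖(∫ t in Set.Ioc (0:ℝ) d, (fA t ζ - fB t ζ))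
          + ∫ t in Set.Ioi d, (fA t ζ - fB t ζ)‖
        ≤ c * ((2 / α + 1 / (1 - α)) * d ^ α) := by
          rw [← harith]; exact mul_le_mul_of_nonneg_left hnorm hcpos
      _ = c * (2 / α + 1 / (1 - α)) * d ^ α := by ring
  · -- d = 0
    have hz : Set.EqOn (fun t => fA t ζ - fB t ζ) (fun _ => (0:H)) (Set.Ioi (0:ℝ)) := by
      intro t ht
      have hbd := hbdd t ht
      rw [hd, ← hd0, zero_mul] at hbd
      exact norm_le_zero_iff.mp hbd
    rw [setIntegral_congr_fun measurableSet_Ioi hz, integral_zero, norm_zero, mul_zero]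
    exact mul_nonneg (mul_nonneg hcpos (add_nonneg (div_nonneg zero_le_two hα0.le)
      (div_nonneg zero_le_one (by linarith)))) (Real.rpow_nonneg (norm_nonneg _) α)
end

section
/- Let x ∈ B(H) with numerical range contained in the sector S_ρ = {re^{iθ} : r ≥ 0, |θ| ≤ ρ} for some ρ < π/2. Write x = a + ib with a = Re(x) ≥ 0 and b = Im(x) selfadjoint. Then x*x ≤ ‖a‖ sec²(ρ) · a; that is, x/‖Re(x)‖ ∈ (sec²ρ/2)·𝔉_{B(H)}. -/
open Real ContinuousLinearMap

open scoped InnerProductSpace ComplexConjugate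

/-!
Put `t = tan ρ`; the sector hypothesis says `|Im ⟪x u, u⟫| ≤ t Re ⟪x u, u⟫`. For `w = t + i`, the
operators `P = w x + (w x)*` and `Q = w̄ x + (w̄ x)*` are then positive, with
`P + Q = 4t Re x` and `4ti x = w P - w̄ Q`. Cauchy–Schwarz for the positive forms of `P` and `Q`
gives the sectorial Cauchy–Schwarz inequality
`|⟪x u, v⟫|² ≤ (1 + t²) ⟪(Re x) u, u⟫ ⟪(Re x) v, v⟫`, and taking `v = x u` together with
`⟪(Re x) v, v⟫ ≤ ‖Re x‖ ‖v‖²` yields `‖x u‖² ≤ ‖Re x‖ sec² ρ ⟪(Re x) u, u⟫`.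
The argument divides by `t`, so it is run for every `t > tan ρ` and the bound follows in the limit
(this covers `ρ = 0`).
-/

lemma sq_add_le_add_mul_add {p q a b c d : ℝ} (hp : 0 ≤ p) (hq : 0 ≤ q) (ha : 0 ≤ a) (hb : 0 ≤ b)
    (hc : 0 ≤ c) (hd : 0 ≤ d) (hpab : p ^ 2 ≤ a * b) (hqcd : q ^ 2 ≤ c * d) :
    (p + q) ^ 2 ≤ (a + c) * (b + d) := by
  have hpq : p * q ≤ (a * d + c * b) / 2 := by
    refine (pow_le_pow_iff_left₀ (by positivity) (by positivity) two_ne_zero).mp ?_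
    nlinarith [sq_nonneg (a * d - c * b), mul_le_mul hpab hqcd (sq_nonneg q) (by positivity)]
  nlinarith

lemma abs_im_le_mul_re_of_abs_arg_le {ρ s : ℝ} {z : ℂ} (hρ : ρ < π / 2)
    (hz : z = 0 ∨ |z.arg| ≤ ρ) (hs : tan ρ ≤ s) : |z.im| ≤ s * z.re := by
  obtain rfl | harg := hz
  · simp
  obtain hre | rfl := Complex.abs_arg_lt_pi_div_two_iff.mp (harg.trans_lt hρ)
  · have hmem : ∀ θ, |θ| ≤ ρ → θ ∈ Set.Ioo (-(π / 2)) (π / 2) := fun θ hθ =>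
      abs_lt.mp (hθ.trans_lt hρ)
    have hρmem := hmem ρ (abs_of_nonneg ((abs_nonneg _).trans harg)).le
    have htan : |tan z.arg| ≤ tan ρ := by
      rw [abs_le, neg_le, ← tan_neg]
      exact ⟨strictMonoOn_tan.monotoneOn (hmem _ (by rwa [abs_neg])) hρmem
          (neg_le.mp (abs_le.mp harg).1),
        strictMonoOn_tan.monotoneOn (hmem _ harg) hρmem (abs_le.mp harg).2⟩
    calc |z.im| = |tan z.arg| * z.re := by
          rw [Complex.tan_arg, abs_div, abs_of_pos hre, div_mul_cancel₀ _ hre.ne']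
      _ ≤ s * z.re := by gcongr; exact htan.trans hs
  · simp

namespace ContinuousLinearMap

variable {E : Type*} [NormedAddCommGroup E] [InnerProductSpace ℂ E]

lemma abs_im_inner_le_of_forall_norm_eq_one {x : E →L[ℂ] E} {t : ℝ}
    (hx : ∀ ξ, ‖ξ‖ = 1 → |(⟪x ξ, ξ⟫_ℂ).im| ≤ t * (⟪x ξ, ξ⟫_ℂ).re) (u : E) :
    |(⟪x u, u⟫_ℂ).im| ≤ t * (⟪x u, u⟫_ℂ).re := by
  obtain rfl | hu := eq_or_ne u 0
  · simp
  have hr : 0 < ‖u‖⁻¹ ^ 2 := by positivity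
  have hscale : ⟪x (((‖u‖⁻¹ : ℝ) : ℂ) • u), ((‖u‖⁻¹ : ℝ) : ℂ) • u⟫_ℂ =
      (‖u‖⁻¹ ^ 2 : ℝ) * ⟪x u, u⟫_ℂ := by
    rw [map_smul, inner_smul_left, inner_smul_right, Complex.conj_ofReal]; push_cast; ring
  have h := hx (((‖u‖⁻¹ : ℝ) : ℂ) • u) (by
    rw [norm_smul, Complex.norm_real, norm_inv, norm_norm, inv_mul_cancel₀ (norm_ne_zero_iff.mpr hu)])
  rw [hscale, Complex.re_ofReal_mul, Complex.im_ofReal_mul, abs_mul, abs_of_pos hr,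
    mul_left_comm] at h
  exact le_of_mul_le_mul_left h hr

variable [CompleteSpace E]

lemma IsPositive.norm_inner_sq_le {T : E →L[ℂ] E} (hT : T.IsPositive) (u v : E) :
    ‖⟪T u, v⟫_ℂ‖ ^ 2 ≤ (⟪T u, u⟫_ℂ).re * (⟪T v, v⟫_ℂ).re := by
  obtain ⟨s, rfl⟩ := CStarAlgebra.nonneg_iff_eq_star_mul_self.mp ((nonneg_iff_isPositive T).mpr hT)
  have hs : ∀ u v, ⟪(star s * s) u, v⟫_ℂ = ⟪s u, s v⟫_ℂ := fun u v =>
    adjoint_inner_left s v (s u)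
  simp only [hs, ← RCLike.re_to_complex, inner_self_eq_norm_sq, ← mul_pow]
  exact pow_le_pow_left₀ (norm_nonneg _) (norm_inner_le_norm _ _) 2

lemma re_inner_add_star_self_apply (y : E →L[ℂ] E) (u : E) :
    (⟪(y + star y) u, u⟫_ℂ).re = 2 * (⟪y u, u⟫_ℂ).re := by
  rw [add_apply, inner_add_left, star_eq_adjoint, adjoint_inner_left, ← inner_conj_symm,
    Complex.add_re, Complex.conj_re]
  ring

lemma isPositive_add_star_self {y : E →L[ℂ] E} (hy : ∀ u, 0 ≤ (⟪y u, u⟫_ℂ).re) :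
    (y + star y).IsPositive := by
  refine isPositive_def'.mpr ⟨IsSelfAdjoint.add_star_self y, fun u => ?_⟩
  rw [reApplyInnerSelf_apply, RCLike.re_to_complex, re_inner_add_star_self_apply]
  linarith [hy u]

lemma re_inner_half_add_adjoint_apply (x : E →L[ℂ] E) (u : E) :
    (⟪((2 : ℂ)⁻¹ • (x + adjoint x)) u, u⟫_ℂ).re = (⟪x u, u⟫_ℂ).re := by
  rw [smul_apply, inner_smul_left, ← star_eq_adjoint, Complex.mul_re,
    re_inner_add_star_self_apply]
  norm_num
  ring

lemma re_inner_le_norm_half_add_adjoint_mul_sq (x : E →L[ℂ] E) (u : E) :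
    (⟪x u, u⟫_ℂ).re ≤ ‖(2 : ℂ)⁻¹ • (x + adjoint x)‖ * ‖u‖ ^ 2 := by
  rw [← re_inner_half_add_adjoint_apply, ← RCLike.re_to_complex, sq, ← mul_assoc]
  exact (re_inner_le_norm _ _).trans (mul_le_mul_of_nonneg_right (le_opNorm _ _) (norm_nonneg _))

lemma norm_inner_sq_le_of_abs_im_le {x : E →L[ℂ] E} {t : ℝ} (ht : 0 < t)
    (hx : ∀ u, |(⟪x u, u⟫_ℂ).im| ≤ t * (⟪x u, u⟫_ℂ).re) (u v : E) :
    ‖⟪x u, v⟫_ℂ‖ ^ 2 ≤ (1 + t ^ 2) * (⟪x u, u⟫_ℂ).re * (⟪x v, v⟫_ℂ).re := by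
  set w : ℂ := t + Complex.I
  have hw : ‖w‖ ^ 2 = 1 + t ^ 2 := by
    rw [Complex.sq_norm, Complex.normSq_apply]; simp [w]; ring
  have hww : w * w - star w * star w = 4 * t * Complex.I := by
    simp only [w, Complex.star_def, map_add, Complex.conj_ofReal, Complex.conj_I]; ring
  have hre : ∀ u, (⟪(w • x) u, u⟫_ℂ).re = t * (⟪x u, u⟫_ℂ).re + (⟪x u, u⟫_ℂ).im := fun u => by
    simp [w, Complex.mul_re]; ring
  have hre' : ∀ u, (⟪(star w • x) u, u⟫_ℂ).re = t * (⟪x u, u⟫_ℂ).re - (⟪x u, u⟫_ℂ).im :=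
    fun u => by simp [w, Complex.mul_re]; ring
  set P := w • x + star (w • x)
  set Q := star w • x + star (star w • x)
  have hP : P.IsPositive := isPositive_add_star_self fun u => by
    rw [hre]; linarith [neg_abs_le (⟪x u, u⟫_ℂ).im, hx u]
  have hQ : Q.IsPositive := isPositive_add_star_self fun u => by
    rw [hre']; linarith [le_abs_self (⟪x u, u⟫_ℂ).im, hx u]
  have hPQ : ∀ u, (⟪P u, u⟫_ℂ).re + (⟪Q u, u⟫_ℂ).re = 4 * t * (⟪x u, u⟫_ℂ).re := fun u => by
    rw [re_inner_add_star_self_apply, re_inner_add_star_self_apply, hre, hre']; ring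
  have hx_eq : (4 * t * Complex.I) • x = w • P - star w • Q := by
    rw [← hww]; simp only [P, Q, star_smul, star_star]; module
  have h1 : 4 * t * ‖⟪x u, v⟫_ℂ‖ ≤ ‖w‖ * (‖⟪P u, v⟫_ℂ‖ + ‖⟪Q u, v⟫_ℂ‖) := by
    have h := congrArg (fun T : E →L[ℂ] E => ⟪T u, v⟫_ℂ) hx_eq
    simp only [smul_apply, sub_apply, inner_smul_left, inner_sub_left] at h
    calc 4 * t * ‖⟪x u, v⟫_ℂ‖ = ‖conj (4 * t * Complex.I) * ⟪x u, v⟫_ℂ‖ := by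
          simp [abs_of_pos ht]
      _ = ‖conj w * ⟪P u, v⟫_ℂ - conj (star w) * ⟪Q u, v⟫_ℂ‖ := by rw [h]
      _ ≤ ‖w‖ * (‖⟪P u, v⟫_ℂ‖ + ‖⟪Q u, v⟫_ℂ‖) := by
          refine (norm_sub_le _ _).trans_eq ?_
          simp only [norm_mul, Complex.norm_conj, norm_star]
          ring
  have h2 := sq_add_le_add_mul_add (norm_nonneg _) (norm_nonneg _) (hP.re_inner_nonneg_left u)
    (hP.re_inner_nonneg_left v) (hQ.re_inner_nonneg_left u) (hQ.re_inner_nonneg_left v)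
    (hP.norm_inner_sq_le u v) (hQ.norm_inner_sq_le u v)
  simp only [RCLike.re_to_complex, hPQ] at h2
  have h3 : (4 * t) ^ 2 * ‖⟪x u, v⟫_ℂ‖ ^ 2 ≤
      (4 * t) ^ 2 * ((1 + t ^ 2) * (⟪x u, u⟫_ℂ).re * (⟪x v, v⟫_ℂ).re) := calc
    _ = (4 * t * ‖⟪x u, v⟫_ℂ‖) ^ 2 := by ring
    _ ≤ ‖w‖ ^ 2 * (‖⟪P u, v⟫_ℂ‖ + ‖⟪Q u, v⟫_ℂ‖) ^ 2 := by
      rw [← mul_pow]; exact pow_le_pow_left₀ (by positivity) h1 2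
    _ ≤ (1 + t ^ 2) * ((4 * t * (⟪x u, u⟫_ℂ).re) * (4 * t * (⟪x v, v⟫_ℂ).re)) := by
      rw [hw]; gcongr
    _ = _ := by ring
  exact le_of_mul_le_mul_left h3 (by positivity)

lemma norm_apply_sq_le_of_abs_im_le {x : E →L[ℂ] E} {t : ℝ} (ht : 0 < t)
    (hx : ∀ u, |(⟪x u, u⟫_ℂ).im| ≤ t * (⟪x u, u⟫_ℂ).re) (u : E) :
    ‖x u‖ ^ 2 ≤ ‖(2 : ℂ)⁻¹ • (x + adjoint x)‖ * (1 + t ^ 2) * (⟪x u, u⟫_ℂ).re := by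
  have hre : 0 ≤ (⟪x u, u⟫_ℂ).re := nonneg_of_mul_nonneg_right ((abs_nonneg _).trans (hx u)) ht
  have h := norm_inner_sq_le_of_abs_im_le ht hx u (x u)
  rw [inner_self_eq_norm_sq_to_K, norm_pow, RCLike.norm_ofReal, abs_norm] at h
  have hxu := re_inner_le_norm_half_add_adjoint_mul_sq x (x u)
  obtain hN | hN := (sq_nonneg ‖x u‖).eq_or_lt
  · rw [← hN]; positivity
  · refine le_of_mul_le_mul_right ?_ hN
    nlinarith [mul_le_mul_of_nonneg_left hxu (by positivity : 0 ≤ (1 + t ^ 2) * (⟪x u, u⟫_ℂ).re)]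

lemma isPositive_smul_half_add_adjoint_sub_adjoint_mul_self {x : E →L[ℂ] E} {c : ℝ}
    (hx : ∀ u, ‖x u‖ ^ 2 ≤ c * (⟪x u, u⟫_ℂ).re) :
    (c • ((2 : ℂ)⁻¹ • (x + adjoint x)) - adjoint x * x).IsPositive := by
  refine isPositive_def'.mpr ⟨?_, fun u => ?_⟩
  · refine .sub (.smul (.all c) (.smul ?_ (.add_star_self x))) (.star_mul_self x)
    simp
  · have hsmul : (⟪(c • ((2 : ℂ)⁻¹ • (x + adjoint x))) u, u⟫_ℂ).re = c * (⟪x u, u⟫_ℂ).re := by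
      rw [smul_apply, RCLike.real_smul_eq_coe_smul (K := ℂ), inner_smul_real_left,
        Complex.smul_re, re_inner_half_add_adjoint_apply, smul_eq_mul]
    have hstar : (⟪(adjoint x * x) u, u⟫_ℂ).re = ‖x u‖ ^ 2 := by
      rw [mul_apply_eq_comp, adjoint_inner_left, ← RCLike.re_to_complex, inner_self_eq_norm_sq]
    rw [reApplyInnerSelf_apply, sub_apply, inner_sub_left, map_sub, RCLike.re_to_complex,
      RCLike.re_to_complex, hsmul, hstar]
    exact sub_nonneg.mpr (hx u)

end ContinuousLinearMap

/-- If the numerical range of `x ∈ B(H)` lies in the sector `S_ρ` with `ρ < π/2`, and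
`a = Re(x)`, then `x*x ≤ ‖a‖ sec²(ρ) · a`; i.e. `x/‖Re x‖ ∈ (sec²ρ/2)𝔉_{B(H)}`. -/
theorem stmt6 {H : Type*} [NormedAddCommGroup H] [InnerProductSpace ℂ H] [CompleteSpace H]
    (x : H →L[ℂ] H) (ρ : ℝ) (hρ0 : 0 ≤ ρ) (hρ : ρ < π / 2)
    (hsec : ∀ ξ : H, ‖ξ‖ = 1 →
      (inner ℂ (x ξ) ξ : ℂ) = 0 ∨ |Complex.arg (inner ℂ (x ξ) ξ : ℂ)| ≤ ρ) :
    ((‖(2 : ℂ)⁻¹ • (x + adjoint x)‖ * (1 / Real.cos ρ) ^ 2) •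
        ((2 : ℂ)⁻¹ • (x + adjoint x)) - adjoint x * x).IsPositive := by
  have htan : 0 ≤ tan ρ := tan_nonneg_of_nonneg_of_le_pi_div_two hρ0 hρ.le
  have hsec_sq : (1 / cos ρ) ^ 2 = 1 + tan ρ ^ 2 := by
    rw [one_div, inv_pow, ← inv_one_add_tan_sq (cos_pos_of_mem_Ioo ⟨by linarith, hρ⟩).ne',
      inv_inv]
  refine isPositive_smul_half_add_adjoint_sub_adjoint_mul_self fun u => ?_
  rw [hsec_sq]
  have hbound : ∀ s > tan ρ, ‖x u‖ ^ 2 ≤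
      ‖(2 : ℂ)⁻¹ • (x + adjoint x)‖ * (1 + s ^ 2) * (⟪x u, u⟫_ℂ).re := fun s hs =>
    norm_apply_sq_le_of_abs_im_le (htan.trans_lt hs) (abs_im_inner_le_of_forall_norm_eq_one
      fun ξ hξ => abs_im_le_mul_re_of_abs_arg_le hρ (hsec ξ hξ) hs.le) u
  refine ge_of_tendsto ?_ (eventually_nhdsWithin_of_forall (s := Set.Ioi (tan ρ)) (a := tan ρ) hbound)
  exact (Continuous.tendsto (by fun_prop) _).mono_left nhdsWithin_le_nhds
end

section
/- Let a = a* ≥ 0 and b = b* in B(H) with |⟨bξ,ξ⟩| ≤ M⟨aξ,ξ⟩ for all ξ ∈ H. Then there exists a selfadjoint c ∈ B(H) with ‖c‖ ≤ M and b = a^{1/2} c a^{1/2}. -/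
/-!
Polarization turns the quadratic bound `|⟪b ξ, ξ⟫| ≤ M ‖s ξ‖²` into the sesquilinear bound
`‖⟪b ξ, η⟫‖ ≤ M ‖s ξ‖ ‖s η‖`. Douglas' lemma (a linear map `X` with `‖X v‖ ≤ C ‖Y v‖` factors as
`X = Z Y` with `‖Z‖ ≤ C` and `Z = 0` on `(range Y)ᗮ`) applied to `b†` gives `b† = D s`. Then `D†`
takes values in the closure of `range s`, and `⟪D† ξ, s η⟫ = ⟪b ξ, η⟫` forces `‖D† ξ‖ ≤ M ‖s ξ‖`;
Douglas' lemma again gives `D† = c s` with `‖c‖ ≤ M`, so `b = s† D† = s† c s`. Finally the real part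
`(c + c†) / 2` is selfadjoint, no larger in norm, and still satisfies `b = s c s` because `b = b†`.
-/

open ContinuousLinearMap RCLike

open scoped InnerProductSpace InnerProduct ComplexConjugate

section

variable {𝕜 E F : Type*} [RCLike 𝕜] [NormedAddCommGroup E] [InnerProductSpace 𝕜 E]
  [NormedAddCommGroup F] [InnerProductSpace 𝕜 F]

namespace LinearMap.IsSymmetric

variable {T : E →ₗ[𝕜] E} (hT : T.IsSymmetric) (Y : E →ₗ[𝕜] F) {M : ℝ}
  (h : ∀ x, |re ⟪T x, x⟫_𝕜| ≤ M * ‖Y x‖ ^ 2)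
include hT h

theorem abs_re_inner_le (x y : E) :
    |re ⟪T x, y⟫_𝕜| ≤ M / 2 * (‖Y x‖ ^ 2 + ‖Y y‖ ^ 2) := by
  have polarization :
      re ⟪T (x + y), x + y⟫_𝕜 - re ⟪T (x - y), x - y⟫_𝕜 = 4 * re ⟪T x, y⟫_𝕜 := by
    have hyx : ⟪T y, x⟫_𝕜 = conj ⟪T x, y⟫_𝕜 := by rw [hT y x, inner_conj_symm]
    simp only [map_add, map_sub, inner_add_left, inner_add_right, inner_sub_left,
      inner_sub_right, hyx, RCLike.conj_re]
    ring
  have parallelogram := congrArg (M * ·) (parallelogram_law_with_norm 𝕜 (Y x) (Y y))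
  have hadd := h (x + y)
  have hsub := h (x - y)
  rw [map_add Y] at hadd
  rw [map_sub Y] at hsub
  rw [abs_le] at hadd hsub ⊢
  constructor <;> linarith

theorem norm_inner_le (hM : 0 ≤ M) (x y : E) : ‖⟪T x, y⟫_𝕜‖ ≤ M * ‖Y x‖ * ‖Y y‖ := by
  obtain ⟨u, hu, hz⟩ := exists_norm_eq_mul_self ⟪T x, y⟫_𝕜
  -- Testing `abs_re_inner_le` on `t • ū • x` gives a quadratic in `t` that is nonnegative on `ℝ`.
  have quadratic : ∀ t : ℝ,
      0 ≤ M / 2 * ‖Y x‖ ^ 2 * (t * t) + -‖⟪T x, y⟫_𝕜‖ * t + M / 2 * ‖Y y‖ ^ 2 := by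
    intro t
    have hre : re ⟪T (((t : 𝕜) * conj u) • x), y⟫_𝕜 = t * ‖⟪T x, y⟫_𝕜‖ := by
      rw [map_smul, inner_smul_left, map_mul (starRingEnd 𝕜), conj_conj, conj_ofReal, mul_assoc,
        ← hz]
      norm_cast
    have hnorm : ‖Y (((t : 𝕜) * conj u) • x)‖ ^ 2 = t ^ 2 * ‖Y x‖ ^ 2 := by
      rw [map_smul, norm_smul, norm_mul, norm_conj, hu, norm_ofReal, mul_one, mul_pow, sq_abs]
    have := (le_abs_self _).trans (hT.abs_re_inner_le Y h (((t : 𝕜) * conj u) • x) y)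
    rw [hre, hnorm] at this
    linarith
  have hsq : ‖⟪T x, y⟫_𝕜‖ ^ 2 ≤ (M * ‖Y x‖ * ‖Y y‖) ^ 2 := by
    have := discrim_le_zero quadratic
    rw [discrim] at this
    linear_combination this
  exact (pow_le_pow_iff_left₀ (norm_nonneg _) (by positivity) two_ne_zero).1 hsq

end LinearMap.IsSymmetric

theorem Submodule.norm_le_of_mem_topologicalClosure_of_norm_inner_le {K : Submodule 𝕜 E} {v : E}
    (hv : v ∈ K.topologicalClosure) {C : ℝ} (hC : 0 ≤ C) (h : ∀ k ∈ K, ‖⟪v, k⟫_𝕜‖ ≤ C * ‖k‖) :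
    ‖v‖ ≤ C := by
  rw [← SetLike.mem_coe, K.topologicalClosure_coe] at hv
  have hvv : ‖⟪v, v⟫_𝕜‖ ≤ C * ‖v‖ :=
    closure_minimal (s := (K : Set E)) (t := {k | ‖⟪v, k⟫_𝕜‖ ≤ C * ‖k‖}) h
      (isClosed_le (by fun_prop) (by fun_prop)) hv
  rw [inner_self_eq_norm_sq_to_K, norm_pow, RCLike.norm_ofReal, abs_norm] at hvv
  nlinarith [norm_nonneg v]

theorem LinearMap.exists_norm_le_comp_eq_of_norm_le {V W : Type*} [AddCommGroup V] [Module 𝕜 V]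
    [NormedAddCommGroup W] [NormedSpace 𝕜 W] [CompleteSpace W] [CompleteSpace E]
    (X : V →ₗ[𝕜] W) (Y : V →ₗ[𝕜] E) {C : ℝ} (hC : 0 ≤ C) (h : ∀ v, ‖X v‖ ≤ C * ‖Y v‖) :
    ∃ Z : E →L[𝕜] W, ‖Z‖ ≤ C ∧ (∀ v, Z (Y v) = X v) ∧ ∀ x ∈ (range Y)ᗮ, Z x = 0 := by
  set K := (range Y).topologicalClosure
  let e : V →ₗ[𝕜] K :=
    Y.codRestrict K fun v ↦ (range Y).le_topologicalClosure (mem_range_self Y v)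
  have he : DenseRange e := by
    rw [DenseRange, Topology.IsInducing.subtypeVal.dense_iff, ← Set.range_comp]
    exact fun k ↦ (range Y).topologicalClosure_coe ▸ k.2
  have hXe : ∀ v, ‖X v‖ ≤ C * ‖e v‖ := h
  refine ⟨X.extendOfNorm e ∘L K.orthogonalProjectionOnto, ?_, fun v ↦ ?_, fun x hx ↦ ?_⟩
  · calc ‖X.extendOfNorm e ∘L K.orthogonalProjectionOnto‖
        ≤ ‖X.extendOfNorm e‖ * ‖K.orthogonalProjectionOnto‖ := opNorm_comp_le _ _
      _ ≤ C * 1 := by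
        gcongr
        exacts [opNorm_extendOfNorm_le he hC hXe, K.orthogonalProjectionOnto_norm_le]
      _ = C := mul_one C
  · rw [ContinuousLinearMap.comp_apply, show Y v = (e v : E) from rfl,
      K.orthogonalProjectionOnto_mem_subspace_eq_self, extendOfNorm_eq he ⟨C, hXe⟩]
  · rw [← Submodule.orthogonal_closure, ← K.orthogonalProjectionOnto_eq_zero_iff] at hx
    rw [ContinuousLinearMap.comp_apply, hx, map_zero]

theorem ContinuousLinearMap.exists_norm_le_eq_adjoint_comp_comp [CompleteSpace E]
    [CompleteSpace F] (b : E →L[𝕜] E) (s : E →L[𝕜] F) {M : ℝ} (hM : 0 ≤ M)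
    (h : ∀ x y, ‖⟪b x, y⟫_𝕜‖ ≤ M * ‖s x‖ * ‖s y‖) :
    ∃ c : F →L[𝕜] F, ‖c‖ ≤ M ∧ b = s† ∘L c ∘L s := by
  have hb_adjoint : ∀ y, ‖(b†) y‖ ≤ M * ‖s‖ * ‖s y‖ := fun y ↦
    Submodule.norm_le_of_mem_topologicalClosure_of_norm_inner_le (K := ⊤)
      (Submodule.le_topologicalClosure _ Submodule.mem_top) (by positivity) fun x _ ↦ by
        rw [adjoint_inner_left, norm_inner_symm]
        calc ‖⟪b x, y⟫_𝕜‖ ≤ M * ‖s x‖ * ‖s y‖ := h x y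
          _ ≤ M * (‖s‖ * ‖x‖) * ‖s y‖ := by gcongr; exact s.le_opNorm x
          _ = M * ‖s‖ * ‖s y‖ * ‖x‖ := by ring
  obtain ⟨D, -, hDs, hD_orth⟩ :=
    (b† : E →ₗ[𝕜] E).exists_norm_le_comp_eq_of_norm_le (s : E →ₗ[𝕜] F) (by positivity) hb_adjoint
  have hD_mem : ∀ x, (D†) x ∈ (LinearMap.range (s : E →ₗ[𝕜] F)).topologicalClosure := by
    intro x
    rw [← Submodule.orthogonal_orthogonal_eq_closure]
    intro z hz
    rw [adjoint_inner_right, hD_orth z hz, inner_zero_left]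
  have hD_inner : ∀ x y, ⟪(D†) x, s y⟫_𝕜 = ⟪b x, y⟫_𝕜 := fun x y ↦ by
    rw [adjoint_inner_left, show D (s y) = (b†) y from hDs y, adjoint_inner_right]
  have hD_norm : ∀ x, ‖(D†) x‖ ≤ M * ‖s x‖ := fun x ↦
    Submodule.norm_le_of_mem_topologicalClosure_of_norm_inner_le (hD_mem x) (by positivity) <| by
      rintro _ ⟨y, rfl⟩
      exact (hD_inner x y).symm ▸ h x y
  obtain ⟨c, hc, hcs, -⟩ :=
    (D† : E →ₗ[𝕜] F).exists_norm_le_comp_eq_of_norm_le (s : E →ₗ[𝕜] F) hM hD_norm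
  refine ⟨c, hc, ext fun x ↦ ext_inner_right 𝕜 fun y ↦ ?_⟩
  rw [comp_apply, comp_apply, adjoint_inner_left, show c (s x) = (D†) x from hcs x, hD_inner]

end

theorem stmt7_general {H : Type*} [NormedAddCommGroup H] [InnerProductSpace ℂ H] [CompleteSpace H]
    (a b : H →L[ℂ] H) (hb : IsSelfAdjoint b) (M : ℝ) (hM : 0 ≤ M)
    (hbd : ∀ ξ : H, |(inner ℂ (b ξ) ξ : ℂ).re| ≤ M * (inner ℂ (a ξ) ξ : ℂ).re)
    (s : H →L[ℂ] H) (hs : s.IsPositive) (hsa : s * s = a) :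
    ∃ c : H →L[ℂ] H, IsSelfAdjoint c ∧ ‖c‖ ≤ M ∧ b = s * c * s := by
  have hs_self : IsSelfAdjoint s := hs.isSelfAdjoint
  have hquad : ∀ ξ, |re ⟪(b : H →ₗ[ℂ] H) ξ, ξ⟫_ℂ| ≤ M * ‖(s : H →ₗ[ℂ] H) ξ‖ ^ 2 := fun ξ ↦ by
    have ha_inner : (⟪a ξ, ξ⟫_ℂ).re = ‖s ξ‖ ^ 2 := by
      rw [← hsa, mul_def, comp_apply, ← adjoint_inner_right, hs_self.adjoint_eq]
      exact inner_self_eq_norm_sq (𝕜 := ℂ) (s ξ)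
    simpa [ha_inner] using hbd ξ
  obtain ⟨c, hc, hbc⟩ := b.exists_norm_le_eq_adjoint_comp_comp s hM
    (hb.isSymmetric.norm_inner_le (s : H →ₗ[ℂ] H) hquad hM)
  rw [hs_self.adjoint_eq, ← mul_def, ← mul_def, ← mul_assoc] at hbc
  have hbc_star : b = s * star c * s := by
    rw [← hb.star_eq, hbc, star_mul, star_mul, hs_self.star_eq, mul_assoc]
  refine ⟨realPart c, (realPart c).prop, (realPart.norm_le c).trans hc, ?_⟩
  rw [realPart_apply_coe, mul_smul_comm, smul_mul_assoc, mul_add, add_mul, ← hbc, ← hbc_star]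
  module

/-- If `a ≥ 0`, `b = b*` in `B(H)` and `|⟨bξ,ξ⟩| ≤ M⟨aξ,ξ⟩` for all `ξ`, then there is a
selfadjoint `c` with `‖c‖ ≤ M` and `b = a^{1/2} c a^{1/2}` (where `a^{1/2}` is the unique
positive square root of `a`). -/
theorem stmt7 {H : Type*} [NormedAddCommGroup H] [InnerProductSpace ℂ H] [CompleteSpace H]
    (a b : H →L[ℂ] H) (ha : a.IsPositive) (hb : IsSelfAdjoint b) (M : ℝ) (hM : 0 ≤ M)
    (hbd : ∀ ξ : H, |(inner ℂ (b ξ) ξ : ℂ).re| ≤ M * (inner ℂ (a ξ) ξ : ℂ).re)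
    (s : H →L[ℂ] H) (hs : s.IsPositive) (hsa : s * s = a) :
    ∃ c : H →L[ℂ] H, IsSelfAdjoint c ∧ ‖c‖ ≤ M ∧ b = s * c * s :=
  stmt7_general a b hb M hM hbd s hs hsa
end

section
/- Let B be a Banach algebra with identity of norm 1, and let L ∈ B with ‖L‖ ≤ 1. Let E₁ be a set of μ₁ integers contained in [0, n], and E₂ a set of μ₂ consecutive nonnegative integers. Set u_i = (1/μ_i) Σ_{j ∈ E_i} L^j. Then ‖u₁u₂ − u₂‖ ≤ 2n/μ₂. -/
/-!
`u₁u₂ − u₂` is the average over `j ∈ E₁` of `L ^ j u₂ − u₂`. Multiplying the block of `μ₂`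
consecutive powers in `μ₂ u₂` by `L ^ j` shifts it by `j`, so the difference consists of `2j`
powers of norm at most `1`, giving `‖L ^ j u₂ − u₂‖ ≤ 2j / μ₂ ≤ 2n / μ₂`.
-/

open Finset

section Ring

variable {R : Type*} [Ring R]

theorem pow_mul_sum_Ico_pow_sub (L : R) (j m μ : ℕ) :
    L ^ j * ∑ k ∈ Ico m (m + μ), L ^ k - ∑ k ∈ Ico m (m + μ), L ^ k =
      ∑ k ∈ Ico (m + μ) (m + μ + j), L ^ k - ∑ k ∈ Ico m (m + j), L ^ k := by
  have hshift : L ^ j * ∑ k ∈ Ico m (m + μ), L ^ k = ∑ k ∈ Ico (m + j) (m + μ + j), L ^ k := by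
    simp only [mul_sum, ← pow_add, ← sum_Ico_add (fun k => L ^ k)]
  rw [hshift, sub_eq_sub_iff_add_eq_add, add_comm, sum_Ico_consecutive _ (by omega) (by omega),
    add_comm (∑ k ∈ Ico (m + μ) _, _), sum_Ico_consecutive _ (by omega) (by omega)]

end Ring

section NormedRing

variable {R : Type*} [NormedRing R] [NormOneClass R] {L : R}

theorem norm_sum_pow_le_card (hL : ‖L‖ ≤ 1) (s : Finset ℕ) : ‖∑ k ∈ s, L ^ k‖ ≤ s.card := by
  simpa using norm_sum_le_of_le s fun k _ => (norm_pow_le L k).trans (pow_le_one₀ (norm_nonneg L) hL)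

theorem norm_pow_mul_sum_Ico_pow_sub_le (hL : ‖L‖ ≤ 1) (j m μ : ℕ) :
    ‖L ^ j * ∑ k ∈ Ico m (m + μ), L ^ k - ∑ k ∈ Ico m (m + μ), L ^ k‖ ≤ 2 * j := by
  rw [pow_mul_sum_Ico_pow_sub]
  calc _ ≤ ‖∑ k ∈ Ico (m + μ) (m + μ + j), L ^ k‖ + ‖∑ k ∈ Ico m (m + j), L ^ k‖ :=
        norm_sub_le _ _
    _ ≤ j + j := by
        gcongr
        · simpa using norm_sum_pow_le_card hL (Ico (m + μ) (m + μ + j))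
        · simpa using norm_sum_pow_le_card hL (Ico m (m + j))
    _ = 2 * j := by ring

end NormedRing

theorem norm_average_mul_sub_le {ι B : Type*} [NormedRing B] [NormedAlgebra ℝ B] {s : Finset ι}
    (hs : s.Nonempty) (a : ι → B) (x : B) {C : ℝ} (h : ∀ i ∈ s, ‖a i * x - x‖ ≤ C) :
    ‖((s.card : ℝ)⁻¹ • ∑ i ∈ s, a i) * x - x‖ ≤ C := by
  have hcard : (s.card : ℝ) ≠ 0 := by exact_mod_cast hs.card_pos.ne'
  have hrw : ((s.card : ℝ)⁻¹ • ∑ i ∈ s, a i) * x - x =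
      (s.card : ℝ)⁻¹ • ∑ i ∈ s, (a i * x - x) := by
    rw [sum_sub_distrib, sum_const, ← Nat.cast_smul_eq_nsmul ℝ, smul_sub, smul_smul,
      inv_mul_cancel₀ hcard, one_smul, smul_mul_assoc, sum_mul]
  rw [hrw, norm_smul, norm_inv, RCLike.norm_natCast, inv_mul_le_iff₀ (by positivity)]
  simpa using norm_sum_le_of_le s h

theorem stmt11_general {B : Type*} [NormedRing B] [NormOneClass B] [NormedAlgebra ℝ B]
    (L : B) (hL : ‖L‖ ≤ 1) (n : ℕ) (E₁ : Finset ℕ) (hE₁ : ∀ j ∈ E₁, j ≤ n)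
    (hE₁ne : E₁.Nonempty) (m₀ μ₂ : ℕ) :
    ‖((E₁.card : ℝ)⁻¹ • ∑ j ∈ E₁, L ^ j) *
        ((μ₂ : ℝ)⁻¹ • ∑ k ∈ Finset.Ico m₀ (m₀ + μ₂), L ^ k) -
      (μ₂ : ℝ)⁻¹ • ∑ k ∈ Finset.Ico m₀ (m₀ + μ₂), L ^ k‖ ≤ 2 * n / μ₂ := by
  refine norm_average_mul_sub_le hE₁ne _ _ fun j hj => ?_
  have hjn : (j : ℝ) ≤ n := by exact_mod_cast hE₁ j hj
  calc _ = (μ₂ : ℝ)⁻¹ *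
        ‖L ^ j * ∑ k ∈ Ico m₀ (m₀ + μ₂), L ^ k - ∑ k ∈ Ico m₀ (m₀ + μ₂), L ^ k‖ := by
        rw [mul_smul_comm, ← smul_sub, norm_smul, norm_inv, RCLike.norm_natCast]
    _ ≤ (μ₂ : ℝ)⁻¹ * (2 * n) := by
        gcongr
        exact (norm_pow_mul_sum_Ico_pow_sub_le hL j m₀ μ₂).trans (by linarith)
    _ = 2 * n / μ₂ := by ring

/-- Averaging estimate: if `‖L‖ ≤ 1` in a unital Banach algebra, `E₁` is a set of integers in
`[0,n]` and `E₂` is a set of `μ₂` consecutive nonnegative integers, with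
`uᵢ = (1/μᵢ)Σ_{j∈Eᵢ} L^j`, then `‖u₁u₂ − u₂‖ ≤ 2n/μ₂`. -/
theorem stmt11 {B : Type*} [NormedRing B] [NormOneClass B] [NormedAlgebra ℝ B]
    (L : B) (hL : ‖L‖ ≤ 1) (n : ℕ) (E₁ : Finset ℕ) (hE₁ : ∀ j ∈ E₁, j ≤ n)
    (hE₁ne : E₁.Nonempty) (m₀ μ₂ : ℕ) (hμ₂ : 0 < μ₂) :
    ‖((E₁.card : ℝ)⁻¹ • ∑ j ∈ E₁, L ^ j) *
        ((μ₂ : ℝ)⁻¹ • ∑ k ∈ Finset.Ico m₀ (m₀ + μ₂), L ^ k) -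
      (μ₂ : ℝ)⁻¹ • ∑ k ∈ Finset.Ico m₀ (m₀ + μ₂), L ^ k‖ ≤ 2 * n / μ₂ :=
  stmt11_general L hL n E₁ hE₁ hE₁ne m₀ μ₂
end
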